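/- arXiv:2202.05246 — 3 statements merged into one kernel-verified Lean document; each statement's English description precedes it below -/
import Mathlib

section
/- Assume the mapping h ↦ B_h is a successful base class with uniform convergence rate e(n) and constant α, and let η_n = 1/(2√n) and ε_n = √(ln(64n)/n) + 2e(n). Then condition (C2) holds with c(n) = 2η_n + 3ε_n: for every distribution D, every n, and all hypotheses h_0, h_1, E_{S∼D^n}[LR_n(U(h_0,h_1,S))] ≤ Err_D(h_1) + 2η_n + 3ε_n. -/
/-!
The update `U` keeps `h₀` only when the empirical minimum over `B_{h₀}` is below that over
`B_{h₁}` plus `ε_n`; by uniform convergence the true minimum over `B_{h₀}` is then at most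
`Err_D(h₁) + ε_n` plus the two uniform deviations on `S`. The randomized ERM over `B_h` loses at
most twice the uniform deviation against the best element of `B_h`, and regularization costs at
most `η_n` because all losses lie in `[0, 1]`. In expectation the deviations contribute at most
`4 e(n) ≤ 2 ε_n`.
-/

open MeasureTheory Finset Filter

noncomputable section

set_option linter.unusedSectionVars false

variable {X : Type*} [MeasurableSpace X] {k : ℕ}

/-- Population (true) loss of hypothesis `h` under distribution `D`. -/
def errD (D : Measure (X × Fin k)) (h : X → Fin k) : ℝ :=
  (D {p | h p.1 ≠ p.2}).toReal

/-- Empirical loss of `h` on the sample `S`. -/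
def errS {n : ℕ} (S : Fin n → X × Fin k) (h : X → Fin k) : ℝ :=
  ((Finset.univ.filter fun i => h (S i).1 ≠ (S i).2).card : ℝ) / n

/-- Expected value of `φ` under the PMF `μ`. -/
def pmfExp {H : Type*} (μ : PMF H) (φ : H → ℝ) : ℝ := ∑' f, (μ f).toReal * φ f

open scoped Classical in
/-- The set of empirical risk minimizers in `B` with respect to the sample `S`. -/
def ermSet {n : ℕ} (B : Finset (X → Fin k)) (S : Fin n → X × Fin k) :
    Finset (X → Fin k) :=
  B.filter fun f => ∀ g ∈ B, errS S f ≤ errS S g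

theorem ermSet_nonempty {n : ℕ} (B : Finset (X → Fin k)) (hB : B.Nonempty)
    (S : Fin n → X × Fin k) : (ermSet B S).Nonempty := by
  classical
  obtain ⟨f, hf, hmin⟩ := Finset.exists_min_image B (errS S) hB
  refine ⟨f, ?_⟩
  simp only [ermSet, Finset.mem_filter]
  exact ⟨hf, hmin⟩

/-- The randomized ERM `G(h,S)`: a uniformly random empirical risk minimizer in `B`.
(On the empty sample all empirical losses are `0`, so this is uniform on `B`.) -/
def ermPMF {n : ℕ} (B : Finset (X → Fin k)) (hB : B.Nonempty)
    (S : Fin n → X × Fin k) : PMF (X → Fin k) :=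
  PMF.uniformOfFinset (ermSet B S) (ermSet_nonempty B hB S)

/-- `LG D B hB n = E_{S ∼ D^n} E[Err_D (G(h,S))]`: the expected population loss of the
randomized ERM over `B` trained on `n` i.i.d. examples from `D`. -/
def LG (D : Measure (X × Fin k)) (B : Finset (X → Fin k)) (hB : B.Nonempty) (n : ℕ) : ℝ :=
  ∫ S, pmfExp (ermPMF B hB S) (errD D) ∂(Measure.pi fun _ : Fin n => D)

/-- `LR_n(h) = (1 - η_n)·LG_n(h) + η_n·LG_0(h)`: the expected population loss of the
regularization algorithm `R`, which outputs `G(h,S)` with probability `1 - η_n` and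
`G(h,∅)` with probability `η_n` (note `LG_0(h) = α`). -/
def LRc (η : ℕ → ℝ) (D : Measure (X × Fin k)) (B : (X → Fin k) → Finset (X → Fin k))
    (hB : ∀ h, h ∈ B h) (n : ℕ) (h : X → Fin k) : ℝ :=
  (1 - η n) * LG D (B h) ⟨h, hB h⟩ n + η n * LG D (B h) ⟨h, hB h⟩ 0

open scoped Classical in
/-- The update algorithm `U`: given the current hypothesis `h0`, the candidate `h1`, and a
sample `S`, output `h0` if `min_{f ∈ B h0} Err_S(f) < min_{f ∈ B h1} Err_S(f) + ε`, and
output `h1` otherwise. -/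
def update {n : ℕ} (B : (X → Fin k) → Finset (X → Fin k)) (hB : ∀ h, h ∈ B h)
    (ε : ℝ) (h0 h1 : X → Fin k) (S : Fin n → X × Fin k) : X → Fin k :=
  if (B h0).inf' ⟨h0, hB h0⟩ (errS S) < (B h1).inf' ⟨h1, hB h1⟩ (errS S) + ε then h0
  else h1

/-- The regularization parameter `η_n = 1/(2√n)`. -/
def ηp (n : ℕ) : ℝ := 1 / (2 * Real.sqrt n)

/-- The deviation parameter `u_n = √(ln(64 n)/n)`. -/
def up (n : ℕ) : ℝ := Real.sqrt (Real.log (64 * n) / n)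

/-- The update threshold `ε_n = √(ln(64 n)/n) + 2 e(n)`. -/
def εp (e : ℕ → ℝ) (n : ℕ) : ℝ := up n + 2 * e n

lemma errS_nonneg {n : ℕ} (S : Fin n → X × Fin k) (h : X → Fin k) : 0 ≤ errS S h := by
  unfold errS; positivity

lemma errS_le_one {n : ℕ} (S : Fin n → X × Fin k) (h : X → Fin k) : errS S h ≤ 1 := by
  unfold errS
  rcases Nat.eq_zero_or_pos n with rfl | hn
  · simp
  · rw [div_le_one (by exact_mod_cast hn)]
    exact_mod_cast (Finset.card_filter_le _ _).trans_eq (Finset.card_fin n)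

lemma errD_nonneg (D : Measure (X × Fin k)) (h : X → Fin k) : 0 ≤ errD D h :=
  ENNReal.toReal_nonneg

lemma errD_le_one (D : Measure (X × Fin k)) [IsProbabilityMeasure D] (h : X → Fin k) :
    errD D h ≤ 1 :=
  ENNReal.toReal_le_of_le_ofReal zero_le_one (by simpa using prob_le_one)

lemma measurable_errS {n : ℕ} {f : X → Fin k} (hf : Measurable f) :
    Measurable fun S : Fin n → X × Fin k => errS S f := by
  classical
  have hmis : ∀ i : Fin n, MeasurableSet {S : Fin n → X × Fin k | f (S i).1 ≠ (S i).2} :=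
    fun i => (measurableSet_eq_fun (hf.comp (measurable_pi_apply i).fst)
      (measurable_pi_apply i).snd).compl
  simp only [errS, Finset.card_filter, Nat.cast_sum, Nat.cast_ite, Nat.cast_one, Nat.cast_zero]
  exact (Finset.measurable_sum _ fun i _ =>
    Measurable.ite (hmis i) measurable_const measurable_const).div_const _

lemma pmfExp_uniformOfFinset {H : Type*} (T : Finset H) (hT : T.Nonempty) (φ : H → ℝ) :
    pmfExp (PMF.uniformOfFinset T hT) φ = T.expect φ := by
  classical
  rw [pmfExp, tsum_eq_sum (s := T) fun f hf => by simp [hf], Finset.expect_eq_sum_div_card,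
    Finset.sum_div]
  refine Finset.sum_congr rfl fun f hf => ?_
  simp [PMF.uniformOfFinset_apply, hf, div_eq_inv_mul]

section UniformDeviation

variable (D : Measure (X × Fin k)) (B : Finset (X → Fin k)) (hB : B.Nonempty)

def uniformDeviation {n : ℕ} (S : Fin n → X × Fin k) : ℝ :=
  B.sup' hB fun f => |errS S f - errD D f|

variable {B} {n : ℕ} (S : Fin n → X × Fin k) {f : X → Fin k}

lemma abs_errS_sub_errD_le (hf : f ∈ B) :
    |errS S f - errD D f| ≤ uniformDeviation D B hB S :=
  Finset.le_sup' (fun f => |errS S f - errD D f|) hf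

lemma uniformDeviation_nonneg : 0 ≤ uniformDeviation D B hB S :=
  (abs_nonneg _).trans (abs_errS_sub_errD_le D hB S hB.choose_spec)

lemma errD_le_errS_add (hf : f ∈ B) : errD D f ≤ errS S f + uniformDeviation D B hB S := by
  linarith [abs_le.1 (abs_errS_sub_errD_le D hB S hf)]

lemma errS_le_errD_add (hf : f ∈ B) : errS S f ≤ errD D f + uniformDeviation D B hB S := by
  linarith [abs_le.1 (abs_errS_sub_errD_le D hB S hf)]

lemma errD_le_of_mem_ermSet (hf : f ∈ ermSet B S) :
    errD D f ≤ B.inf' hB (errD D) + 2 * uniformDeviation D B hB S := by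
  classical
  obtain ⟨hfB, hf_min⟩ := Finset.mem_filter.1 hf
  obtain ⟨g, hgB, hg⟩ := Finset.exists_mem_eq_inf' hB (errD D)
  rw [hg]
  linarith [errD_le_errS_add D hB S hfB, hf_min g hgB, errS_le_errD_add D hB S hgB]

lemma integrable_uniformDeviation [IsProbabilityMeasure D] (hBm : ∀ f ∈ B, Measurable f)
    (n : ℕ) :
    Integrable (fun S => uniformDeviation D B hB S) (Measure.pi fun _ : Fin n => D) := by
  have hmeas : Measurable fun S : Fin n → X × Fin k => uniformDeviation D B hB S := by
    have := Finset.measurable_sup' hB fun f hf =>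
      ((measurable_errS (n := n) (hBm f hf)).sub (measurable_const (a := errD D f))).abs
    convert this using 1
    ext S
    simp [uniformDeviation, Finset.sup'_apply]
  refine Integrable.of_bound hmeas.aestronglyMeasurable 1 (ae_of_all _ fun S => ?_)
  rw [Real.norm_eq_abs, abs_of_nonneg (uniformDeviation_nonneg D hB S)]
  refine Finset.sup'_le _ _ fun f _ => abs_sub_le_iff.2 ⟨?_, ?_⟩ <;>
    linarith [errS_nonneg S f, errS_le_one S f, errD_nonneg D f, errD_le_one D f]

end UniformDeviation

lemma LG_le_inf'_add (D : Measure (X × Fin k)) [IsProbabilityMeasure D]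
    (B : Finset (X → Fin k)) (hB : B.Nonempty) (hBm : ∀ f ∈ B, Measurable f) (n : ℕ) :
    LG D B hB n ≤ B.inf' hB (errD D) +
      2 * ∫ S, uniformDeviation D B hB S ∂(Measure.pi fun _ : Fin n => D) := by
  have hdev := integrable_uniformDeviation D hB hBm n
  calc LG D B hB n
      ≤ ∫ S, (B.inf' hB (errD D) + 2 * uniformDeviation D B hB S)
          ∂(Measure.pi fun _ : Fin n => D) := by
        refine integral_mono_of_nonneg (ae_of_all _ fun S => ?_)
          ((integrable_const _).add (hdev.const_mul 2)) (ae_of_all _ fun S => ?_)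
        · simp only [ermPMF, pmfExp_uniformOfFinset]
          exact Finset.expect_nonneg fun f _ => errD_nonneg D f
        · simp only [ermPMF, pmfExp_uniformOfFinset]
          exact Finset.expect_le (ermSet_nonempty B hB S) fun f hf =>
            errD_le_of_mem_ermSet D hB S hf
    _ = _ := by
        rw [integral_add (integrable_const _) (hdev.const_mul 2), integral_const_mul]
        simp

lemma LG_nonneg (D : Measure (X × Fin k)) (B : Finset (X → Fin k)) (hB : B.Nonempty) (n : ℕ) :
    0 ≤ LG D B hB n :=
  integral_nonneg fun S => by
    simp only [ermPMF, pmfExp_uniformOfFinset]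
    exact Finset.expect_nonneg fun f _ => errD_nonneg D f

lemma LG_le_one (D : Measure (X × Fin k)) [IsProbabilityMeasure D] (B : Finset (X → Fin k))
    (hB : B.Nonempty) (n : ℕ) : LG D B hB n ≤ 1 := by
  refine (integral_mono_of_nonneg (ae_of_all _ fun S => ?_) (integrable_const 1)
    (ae_of_all _ fun S => ?_)).trans_eq (by simp)
  all_goals simp only [ermPMF, pmfExp_uniformOfFinset]
  · exact Finset.expect_nonneg fun f _ => errD_nonneg D f
  · exact Finset.expect_le (ermSet_nonempty B hB S) fun f _ => errD_le_one D f

lemma LRc_le_LG_add (η : ℕ → ℝ) (D : Measure (X × Fin k)) [IsProbabilityMeasure D]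
    (B : (X → Fin k) → Finset (X → Fin k)) (hB : ∀ h, h ∈ B h) {n : ℕ} (hη : 0 ≤ η n)
    (h : X → Fin k) : LRc η D B hB n h ≤ LG D (B h) ⟨h, hB h⟩ n + η n := by
  have hG_n := LG_nonneg D (B h) ⟨h, hB h⟩ n
  have hG_0 := LG_le_one D (B h) ⟨h, hB h⟩ 0
  rw [LRc]
  nlinarith

lemma inf'_errD_update_le (D : Measure (X × Fin k)) (B : (X → Fin k) → Finset (X → Fin k))
    (hB : ∀ h, h ∈ B h) {ε : ℝ} (hε : 0 ≤ ε) (h0 h1 : X → Fin k) {n : ℕ}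
    (S : Fin n → X × Fin k) :
    (B (update B hB ε h0 h1 S)).inf' ⟨_, hB _⟩ (errD D) ≤ errD D h1 + ε +
      (uniformDeviation D (B h0) ⟨h0, hB h0⟩ S + uniformDeviation D (B h1) ⟨h1, hB h1⟩ S) := by
  have hdev0 := uniformDeviation_nonneg D ⟨h0, hB h0⟩ S
  have hdev1 := uniformDeviation_nonneg D ⟨h1, hB h1⟩ S
  unfold update
  split_ifs with h0_kept
  · obtain ⟨f, hf, hf_erm⟩ := Finset.exists_mem_eq_inf' ⟨h0, hB h0⟩ (errS S)
    rw [hf_erm] at h0_kept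
    linarith [Finset.inf'_le (errD D) hf, errD_le_errS_add D ⟨h0, hB h0⟩ S hf,
      Finset.inf'_le (errS S) (hB h1), errS_le_errD_add D ⟨h1, hB h1⟩ S (hB h1)]
  · linarith [Finset.inf'_le (errD D) (hB h1)]

lemma integral_mono_of_nonneg_right {α : Type*} [MeasurableSpace α] {μ : Measure α}
    {f g : α → ℝ} (hg : Integrable g μ) (hg_nonneg : ∀ x, 0 ≤ g x) (hfg : ∀ x, f x ≤ g x) :
    ∫ x, f x ∂μ ≤ ∫ x, g x ∂μ := by
  by_cases hf : Integrable f μ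
  · exact integral_mono hf hg hfg
  · rw [integral_undef hf]
    exact integral_nonneg hg_nonneg

theorem condition_C2_holds_general
    (B : (X → Fin k) → Finset (X → Fin k)) (hB : ∀ h, h ∈ B h)
    (hBmeas : ∀ h f, f ∈ B h → Measurable f)
    (e : ℕ → ℝ)
    -- (ii) `B h` satisfies uniform convergence with rate `e n`
    (hUC : ∀ D : Measure (X × Fin k), IsProbabilityMeasure D → ∀ h n,
      ∫ S, (B h).sup' ⟨h, hB h⟩ (fun f => |errS S f - errD D f|)
        ∂(Measure.pi fun _ : Fin n => D) ≤ e n) :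
    ∀ D : Measure (X × Fin k), IsProbabilityMeasure D → ∀ n h0 h1,
      ∫ S, LRc ηp D B hB n (update B hB (εp e n) h0 h1 S)
          ∂(Measure.pi fun _ : Fin n => D) ≤
        errD D h1 + (2 * ηp n + 3 * εp e n) := by
  intro D _ n h0 h1
  set μ := Measure.pi fun _ : Fin n => D
  set dev : (X → Fin k) → (Fin n → X × Fin k) → ℝ :=
    fun h S => uniformDeviation D (B h) ⟨h, hB h⟩ S
  have hUC' h : ∫ S, dev h S ∂μ ≤ e n := hUC D ‹_› h n
  have hdev_int h : Integrable (dev h) μ :=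
    integrable_uniformDeviation D ⟨h, hB h⟩ (hBmeas h) n
  have hdev_sum : Integrable (fun S => dev h0 S + dev h1 S) μ := (hdev_int h0).add (hdev_int h1)
  have he : 0 ≤ e n := (integral_nonneg fun S => uniformDeviation_nonneg D _ S).trans (hUC' h1)
  have hη : 0 ≤ ηp n := by unfold ηp; positivity
  have hε : 0 ≤ εp e n := add_nonneg (Real.sqrt_nonneg _) (by linarith)
  have hLRc h : LRc ηp D B hB n h ≤ (B h).inf' ⟨h, hB h⟩ (errD D) + 2 * e n + ηp n := by
    linarith [LRc_le_LG_add ηp D B hB hη h, LG_le_inf'_add D (B h) ⟨h, hB h⟩ (hBmeas h) n,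
      hUC' h]
  set c := errD D h1 + εp e n + 2 * e n + ηp n
  calc ∫ S, LRc ηp D B hB n (update B hB (εp e n) h0 h1 S) ∂μ
      ≤ ∫ S, (c + (dev h0 S + dev h1 S)) ∂μ := by
        refine integral_mono_of_nonneg_right ((integrable_const c).add hdev_sum) (fun S => ?_)
          (fun S => ?_)
        · linarith [errD_nonneg D h1, uniformDeviation_nonneg D ⟨h0, hB h0⟩ S,
            uniformDeviation_nonneg D ⟨h1, hB h1⟩ S]
        · linarith [hLRc (update B hB (εp e n) h0 h1 S), inf'_errD_update_le D B hB hε h0 h1 S]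
    _ = c + (∫ S, dev h0 S ∂μ + ∫ S, dev h1 S ∂μ) := by
        rw [integral_add (integrable_const c) hdev_sum, integral_add (hdev_int h0) (hdev_int h1)]
        simp
    _ ≤ errD D h1 + (2 * ηp n + 3 * εp e n) := by
        have hu : 0 ≤ up n := Real.sqrt_nonneg _
        linarith [hUC' h0, hUC' h1, show εp e n = up n + 2 * e n from rfl]

/-- **Condition (C2) holds with `c(n) = 2 η_n + 3 ε_n`** (Lemma 2.8).  If `h ↦ B h` is a
successful base class with uniform convergence rate `e(n)` and constant `α`, and
`η_n = 1/(2√n)`, `ε_n = √(ln(64 n)/n) + 2 e(n)`, then for every distribution `D`, every `n`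
and all hypotheses `h0, h1`: `E_{S∼D^n}[LR_n(U(h0,h1,S))] ≤ Err_D(h1) + 2 η_n + 3 ε_n`. -/
theorem condition_C2_holds
    (B : (X → Fin k) → Finset (X → Fin k)) (hB : ∀ h, h ∈ B h)
    (hBmeas : ∀ h f, f ∈ B h → Measurable f)
    (e : ℕ → ℝ) (helim : Tendsto e atTop (nhds 0))
    (α : Measure (X × Fin k) → ℝ)
    -- (i) the loss of the randomized ERM over `B h` is monotone
    (hmono : ∀ D : Measure (X × Fin k), IsProbabilityMeasure D → ∀ h n,
      LG D (B h) ⟨h, hB h⟩ (n + 1) ≤ LG D (B h) ⟨h, hB h⟩ n)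
    -- (ii) `B h` satisfies uniform convergence with rate `e n`
    (hUC : ∀ D : Measure (X × Fin k), IsProbabilityMeasure D → ∀ h n,
      ∫ S, (B h).sup' ⟨h, hB h⟩ (fun f => |errS S f - errD D f|)
        ∂(Measure.pi fun _ : Fin n => D) ≤ e n)
    -- (iii) on the empty sample the loss is a constant `α` independent of `h`
    (hα : ∀ D : Measure (X × Fin k), IsProbabilityMeasure D → ∀ h,
      LG D (B h) ⟨h, hB h⟩ 0 = α D) :
    ∀ D : Measure (X × Fin k), IsProbabilityMeasure D → ∀ n h0 h1,
      ∫ S, LRc ηp D B hB n (update B hB (εp e n) h0 h1 S)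
          ∂(Measure.pi fun _ : Fin n => D) ≤
        errD D h1 + (2 * ηp n + 3 * εp e n) :=
  condition_C2_holds_general B hB hBmeas e hUC

end
end

section
/- In binary classification (Y = {0,1}), the mapping h ↦ B_h with B_h = {h, 1−h} is a successful base class with uniform convergence rate e(n) = 1/√n and constant α = 1/2. That is, for every distribution D on X × {0,1}, every hypothesis h, and every n: (i) LG_{n+1}(h) ≤ LG_n(h); (ii) E_{S∼D^n}[max(|Err_S(h) − Err_D(h)|, |Err_S(1−h) − Err_D(1−h)|)] ≤ 1/√n; and (iii) LG_0(h) = 1/2. -/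
/-!
Only the number `c` of sample points misclassified by `h` matters: the ERM over `{h, 1 - h}`
returns `h` when `2c < n`, returns `1 - h` when `2c > n`, and tosses a fair coin on a tie.
Peeling off one coordinate of the sample shows that `c` is binomial with parameters `n` and
`p = Err_D(h)`, the weights satisfying Pascal's recursion for the Bernstein basis; hence
`LG_n(h) = ∑_c ermLoss p n c · b_{n,c}(p)`. One more example changes this risk by
`-(1 - 2p)² / 2 · b_{2m,m}(p) ≤ 0` when `n = 2m`, and by nothing when `n = 2m + 1`, where the
two central terms cancel because `p · b_{2m+1,m} = (1 - p) · b_{2m+1,m+1}`. For (ii), both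
deviations equal `|c / n - p|`, whose mean is at most `√(p(1 - p) / n)` by Cauchy–Schwarz and
the Bernstein variance identity.
-/

open MeasureTheory Finset Filter

noncomputable section

set_option linter.unusedSectionVars false

variable {X : Type*} [MeasurableSpace X] {k : ℕ}

open scoped Classical in
/-- The binary base class `B_h = {h, 1 - h}` consisting of `h` and its pointwise negation. -/
def Bbin (h : X → Fin 2) : Finset (X → Fin 2) := {h, fun x => 1 - h x}

theorem Bbin_nonempty (h : X → Fin 2) : (Bbin h).Nonempty :=
  ⟨h, by simp [Bbin]⟩

namespace bernsteinPolynomial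

open Polynomial

variable (R : Type*) [CommRing R]

theorem succ_succ (n ν : ℕ) :
    bernsteinPolynomial R (n + 1) (ν + 1) =
      Polynomial.X * bernsteinPolynomial R n ν +
        (1 - Polynomial.X) * bernsteinPolynomial R n (ν + 1) := by
  rcases lt_trichotomy ν n with hν | rfl | hν
  · simp only [bernsteinPolynomial]
    rw [Nat.choose_succ_succ, show n + 1 - (ν + 1) = n - (ν + 1) + 1 by omega,
      show n - ν = n - (ν + 1) + 1 by omega]
    push_cast
    ring
  · rw [eq_zero_of_lt R ν.lt_succ_self, mul_zero, add_zero]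
    simp [bernsteinPolynomial, pow_succ, mul_comm]
  · rw [eq_zero_of_lt R hν, eq_zero_of_lt R (by omega), eq_zero_of_lt R (by omega)]
    ring

theorem succ_zero (n : ℕ) :
    bernsteinPolynomial R (n + 1) 0 = (1 - Polynomial.X) * bernsteinPolynomial R n 0 := by
  simp [bernsteinPolynomial, pow_succ, mul_comm]

theorem mul_eval_central (p : ℝ) (m : ℕ) :
    p * (bernsteinPolynomial ℝ (2 * m + 1) m).eval p =
      (1 - p) * (bernsteinPolynomial ℝ (2 * m + 1) (m + 1)).eval p := by
  simp only [bernsteinPolynomial, eval_mul, eval_pow, eval_sub, eval_one, eval_X, eval_natCast,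
    Nat.choose_symm_half, show 2 * m + 1 - m = m + 1 by omega,
    show 2 * m + 1 - (m + 1) = m by omega]
  ring

theorem eval_nonneg {p : ℝ} (hp₀ : 0 ≤ p) (hp₁ : p ≤ 1) (n ν : ℕ) :
    0 ≤ (bernsteinPolynomial ℝ n ν).eval p := by
  simp only [bernsteinPolynomial, eval_mul, eval_pow, eval_sub, eval_one, eval_X, eval_natCast]
  have := sub_nonneg.2 hp₁
  positivity

theorem sum_eval (p : ℝ) (n : ℕ) :
    ∑ ν ∈ range (n + 1), (bernsteinPolynomial ℝ n ν).eval p = 1 := by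
  simpa [eval_finsetSum] using congrArg (eval p) (sum ℝ n)

theorem sum_sq_mul_eval (p : ℝ) (n : ℕ) :
    ∑ ν ∈ range (n + 1), (n * p - ν) ^ 2 * (bernsteinPolynomial ℝ n ν).eval p =
      n * p * (1 - p) := by
  simpa [eval_finsetSum] using congrArg (eval p) (variance ℝ n)

theorem sum_mul_eval_succ (φ : ℕ → ℝ) (p : ℝ) (n : ℕ) :
    ∑ ν ∈ range (n + 2), φ ν * (bernsteinPolynomial ℝ (n + 1) ν).eval p =
      ∑ ν ∈ range (n + 1),
        (p * φ (ν + 1) + (1 - p) * φ ν) * (bernsteinPolynomial ℝ n ν).eval p := by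
  set b := fun ν => (bernsteinPolynomial ℝ n ν).eval p
  have hshift : ∑ ν ∈ range (n + 1), φ (ν + 1) * b (ν + 1) + φ 0 * b 0 =
      ∑ ν ∈ range (n + 1), φ ν * b ν := by
    rw [← sum_range_succ' (fun ν => φ ν * b ν), sum_range_succ]
    simp [b, eq_zero_of_lt ℝ n.lt_succ_self]
  calc ∑ ν ∈ range (n + 2), φ ν * (bernsteinPolynomial ℝ (n + 1) ν).eval p
      = ∑ ν ∈ range (n + 1), (p * (φ (ν + 1) * b ν) + (1 - p) * (φ (ν + 1) * b (ν + 1)))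
          + (1 - p) * (φ 0 * b 0) := by
        rw [sum_range_succ']
        simp only [succ_succ, succ_zero, eval_add, eval_mul, eval_sub, eval_one, eval_X, b]
        congr 1
        · exact sum_congr rfl fun ν _ => by ring
        · ring
    _ = p * ∑ ν ∈ range (n + 1), φ (ν + 1) * b ν +
          (1 - p) * ∑ ν ∈ range (n + 1), φ ν * b ν := by
        rw [← hshift, sum_add_distrib, ← mul_sum, ← mul_sum]
        ring
    _ = _ := by
        simp only [add_mul, sum_add_distrib, mul_sum, mul_assoc, b]

end bernsteinPolynomial

section HitCount

open scoped Classical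

variable {α : Type*} [MeasurableSpace α]

def hitCount (A : Set α) {n : ℕ} (S : Fin n → α) : ℕ := #{i | S i ∈ A}

variable {A : Set α} {n : ℕ}

theorem hitCount_le (S : Fin n → α) : hitCount A S ≤ n :=
  (card_filter_le _ _).trans_eq (card_fin n)

theorem hitCount_compl_add (S : Fin n → α) : hitCount Aᶜ S + hitCount A S = n := by
  rw [hitCount, hitCount, add_comm]
  simpa using card_filter_add_card_filter_not (s := univ) (fun i => S i ∈ A)

theorem hitCount_eq_sum (S : Fin n → α) : hitCount A S = ∑ i, if S i ∈ A then 1 else 0 :=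
  card_filter _ _

theorem hitCount_cons (x : α) (S : Fin n → α) :
    hitCount A (Fin.cons x S : Fin (n + 1) → α) = hitCount A S + if x ∈ A then 1 else 0 := by
  simp only [hitCount_eq_sum, Fin.sum_univ_succ, Fin.cons_zero, Fin.cons_succ, add_comm]

theorem measurable_hitCount (hA : MeasurableSet A) :
    Measurable (hitCount A : (Fin n → α) → ℕ) := by
  simp only [funext hitCount_eq_sum]
  exact Finset.measurable_sum _ fun i _ =>
    Measurable.ite (measurable_pi_apply i hA) measurable_const measurable_const

variable (μ : Measure α) [IsProbabilityMeasure μ]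

theorem integrable_comp_hitCount (hA : MeasurableSet A) (φ : ℕ → ℝ) :
    Integrable (fun S => φ (hitCount A S)) (Measure.pi fun _ : Fin n => μ) := by
  refine .of_bound ((Measurable.of_discrete.comp (measurable_hitCount hA)).aestronglyMeasurable)
    (∑ j ∈ range (n + 1), ‖φ j‖) (ae_of_all _ fun S => ?_)
  exact single_le_sum (f := fun j => ‖φ j‖) (fun _ _ => norm_nonneg _)
    (mem_range.2 (Nat.lt_succ_of_le (hitCount_le S)))

theorem integral_ite_mem (hA : MeasurableSet A) (a b : ℝ) :
    ∫ x, (if x ∈ A then a else b) ∂μ = μ.real A * a + (1 - μ.real A) * b := by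
  rw [← probReal_compl_eq_one_sub hA, ← smul_eq_mul, ← smul_eq_mul, ← setIntegral_const,
    ← setIntegral_const]
  exact integral_piecewise hA integrableOn_const integrableOn_const

theorem integral_comp_hitCount_succ (hA : MeasurableSet A) (φ : ℕ → ℝ) :
    ∫ S, φ (hitCount A S) ∂(Measure.pi fun _ : Fin (n + 1) => μ) =
      μ.real A * ∫ S, φ (hitCount A S + 1) ∂(Measure.pi fun _ : Fin n => μ) +
        (1 - μ.real A) * ∫ S, φ (hitCount A S) ∂(Measure.pi fun _ : Fin n => μ) := by
  have hmp := (measurePreserving_piFinSuccAbove (fun _ : Fin (n + 1) => μ) 0).symm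
  have hcons : ∀ z : α × (Fin n → α),
      (MeasurableEquiv.piFinSuccAbove (fun _ => α) 0).symm z = Fin.cons z.1 z.2 :=
    fun z => Fin.insertNth_zero' z.1 z.2
  rw [← hmp.integral_comp' (fun S => φ (hitCount A S)), integral_prod]
  · have hinner : ∀ x, ∫ T, φ (hitCount A T + if x ∈ A then 1 else 0)
        ∂(Measure.pi fun _ : Fin n => μ) =
          if x ∈ A then ∫ T, φ (hitCount A T + 1) ∂(Measure.pi fun _ : Fin n => μ)
          else ∫ T, φ (hitCount A T) ∂(Measure.pi fun _ : Fin n => μ) := fun x => by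
      split_ifs <;> rfl
    simp only [hcons, hitCount_cons, hinner]
    exact integral_ite_mem μ hA _ _
  · exact (hmp.integrable_comp_emb (MeasurableEquiv.measurableEmbedding _)).2
      (integrable_comp_hitCount μ hA φ)

theorem integral_comp_hitCount (hA : MeasurableSet A) (φ : ℕ → ℝ) :
    ∫ S, φ (hitCount A S) ∂(Measure.pi fun _ : Fin n => μ) =
      ∑ j ∈ range (n + 1), φ j * (bernsteinPolynomial ℝ n j).eval (μ.real A) := by
  induction n generalizing φ with
  | zero => simp [hitCount, bernsteinPolynomial]
  | succ n ih =>
    rw [integral_comp_hitCount_succ μ hA, ih (φ <| · + 1), ih φ,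
      bernsteinPolynomial.sum_mul_eval_succ, mul_sum, mul_sum, ← sum_add_distrib]
    exact sum_congr rfl fun j _ => by ring

end HitCount

section ErmRisk

/-- The expected loss of the uniform ERM over `{h, 1 - h}` on `n` examples, `c` of which are
misclassified by `h`, when `Err_D(h) = p`. -/
def ermLoss (p : ℝ) (n c : ℕ) : ℝ :=
  if 2 * c < n then p else if 2 * c = n then 1 / 2 else 1 - p

variable {p : ℝ} {n c : ℕ}

theorem ermLoss_of_lt (h : 2 * c < n) : ermLoss p n c = p := if_pos h

theorem ermLoss_of_eq (h : 2 * c = n) : ermLoss p n c = 1 / 2 := by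
  rw [ermLoss, if_neg (by omega), if_pos h]

theorem ermLoss_of_gt (h : n < 2 * c) : ermLoss p n c = 1 - p := by
  rw [ermLoss, if_neg (by omega), if_neg (by omega)]

theorem ermLoss_step_of_far (h : 2 * c + 1 < n ∨ n + 1 < 2 * c) :
    p * ermLoss p (n + 1) (c + 1) + (1 - p) * ermLoss p (n + 1) c - ermLoss p n c = 0 := by
  rcases h with h | h
  · rw [ermLoss_of_lt (by omega), ermLoss_of_lt (by omega), ermLoss_of_lt (by omega)]
    ring
  · rw [ermLoss_of_gt (by omega), ermLoss_of_gt (by omega), ermLoss_of_gt (by omega)]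
    ring

def ermRisk (p : ℝ) (n : ℕ) : ℝ :=
  ∑ c ∈ range (n + 1), ermLoss p n c * (bernsteinPolynomial ℝ n c).eval p

variable (p)

theorem ermRisk_zero : ermRisk p 0 = 1 / 2 := by
  simp [ermRisk, ermLoss, bernsteinPolynomial]

theorem ermRisk_succ_sub (n : ℕ) :
    ermRisk p (n + 1) - ermRisk p n = ∑ c ∈ range (n + 1),
      (p * ermLoss p (n + 1) (c + 1) + (1 - p) * ermLoss p (n + 1) c - ermLoss p n c) *
        (bernsteinPolynomial ℝ n c).eval p := by
  rw [ermRisk, ermRisk, bernsteinPolynomial.sum_mul_eval_succ, ← sum_sub_distrib]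
  exact sum_congr rfl fun c _ => by ring

theorem ermRisk_succ_sub_of_even (m : ℕ) :
    ermRisk p (2 * m + 1) - ermRisk p (2 * m) =
      -((1 - 2 * p) ^ 2 / 2 * (bernsteinPolynomial ℝ (2 * m) m).eval p) := by
  rw [ermRisk_succ_sub, sum_eq_single_of_mem m (mem_range.2 (by omega)) fun c _ hc => by
      rw [ermLoss_step_of_far (by omega), zero_mul],
    ermLoss_of_gt (c := m + 1) (by omega), ermLoss_of_lt (c := m) (by omega),
    ermLoss_of_eq (c := m) (by omega)]
  ring

theorem ermRisk_succ_sub_of_odd (m : ℕ) : ermRisk p (2 * m + 2) - ermRisk p (2 * m + 1) = 0 := by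
  rw [ermRisk_succ_sub, sum_eq_add_of_mem m (m + 1) (mem_range.2 (by omega))
      (mem_range.2 (by omega)) (by omega) fun c _ hc => by
      rw [ermLoss_step_of_far (by omega), zero_mul],
    ermLoss_of_eq (n := 2 * m + 2) (c := m + 1) (by omega),
    ermLoss_of_lt (n := 2 * m + 2) (c := m) (by omega),
    ermLoss_of_lt (n := 2 * m + 1) (c := m) (by omega),
    ermLoss_of_gt (n := 2 * m + 2) (c := m + 1 + 1) (by omega),
    ermLoss_of_gt (n := 2 * m + 1) (c := m + 1) (by omega)]
  linear_combination (1 / 2 - p) * bernsteinPolynomial.mul_eval_central p m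

variable {p}

theorem ermRisk_succ_le (hp₀ : 0 ≤ p) (hp₁ : p ≤ 1) (n : ℕ) :
    ermRisk p (n + 1) ≤ ermRisk p n := by
  obtain ⟨m, rfl | rfl⟩ := Nat.even_or_odd' n
  · have hb := bernsteinPolynomial.eval_nonneg hp₀ hp₁ (2 * m) m
    linarith [ermRisk_succ_sub_of_even p m,
      mul_nonneg (div_nonneg (sq_nonneg (1 - 2 * p)) zero_le_two) hb]
  · exact (sub_eq_zero.1 (ermRisk_succ_sub_of_odd p m)).le

theorem sum_abs_sub_mul_bernstein_le (hp₀ : 0 ≤ p) (hp₁ : p ≤ 1) (hn : 0 < n) :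
    ∑ c ∈ range (n + 1), |(c : ℝ) / n - p| * (bernsteinPolynomial ℝ n c).eval p ≤
      1 / √n := by
  set b := fun c => (bernsteinPolynomial ℝ n c).eval p
  have hb : ∀ c, 0 ≤ b c := bernsteinPolynomial.eval_nonneg hp₀ hp₁ n
  have hn' : (0 : ℝ) < n := Nat.cast_pos.2 hn
  have hvar : ∑ c ∈ range (n + 1), ((c : ℝ) / n - p) ^ 2 * b c = p * (1 - p) / n := by
    have : ∀ c : ℕ, ((c : ℝ) / n - p) ^ 2 * b c = (n * p - c) ^ 2 * b c / n ^ 2 := fun c => by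
      field_simp
      ring
    rw [sum_congr rfl fun c _ => this c, ← sum_div, bernsteinPolynomial.sum_sq_mul_eval]
    field_simp
  calc ∑ c ∈ range (n + 1), |(c : ℝ) / n - p| * b c
      = ∑ c ∈ range (n + 1), √(((c : ℝ) / n - p) ^ 2 * b c) * √(b c) := by
        refine sum_congr rfl fun c _ => ?_
        rw [Real.sqrt_mul (sq_nonneg _), Real.sqrt_sq_eq_abs, mul_assoc, Real.mul_self_sqrt (hb c)]
    _ ≤ √(∑ c ∈ range (n + 1), ((c : ℝ) / n - p) ^ 2 * b c) *
          √(∑ c ∈ range (n + 1), b c) :=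
        Real.sum_sqrt_mul_sqrt_le _ (fun c => mul_nonneg (sq_nonneg _) (hb c)) hb
    _ = √(p * (1 - p) / n) := by
        rw [hvar, bernsteinPolynomial.sum_eval, Real.sqrt_one, mul_one]
    _ ≤ √(1 / n) := Real.sqrt_le_sqrt (div_le_div_of_nonneg_right (by nlinarith) hn'.le)
    _ = 1 / √n := by rw [Real.sqrt_div' _ (Nat.cast_nonneg n), Real.sqrt_one]

end ErmRisk

section Binary

def errSet (h : X → Fin k) : Set (X × Fin k) := {z | h z.1 ≠ z.2}

variable {n : ℕ}

theorem measurableSet_errSet {h : X → Fin k} (hh : Measurable h) : MeasurableSet (errSet h) :=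
  (measurableSet_eq_fun (hh.comp measurable_fst) measurable_snd).compl

theorem errD_eq_measureReal (D : Measure (X × Fin k)) (h : X → Fin k) :
    errD D h = D.real (errSet h) := rfl

theorem errS_eq_hitCount (S : Fin n → X × Fin k) (h : X → Fin k) :
    errS S h = hitCount (errSet h) S / n := by
  simp only [errS, hitCount, errSet, Set.mem_ofPred_eq]
  congr

theorem errSet_neg (h : X → Fin 2) : errSet (fun x => 1 - h x) = (errSet h)ᶜ := by
  have key : ∀ a b : Fin 2, 1 - a ≠ b ↔ a = b := by decide
  ext z
  simp [errSet, key]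

theorem errD_neg (D : Measure (X × Fin 2)) [IsProbabilityMeasure D] {h : X → Fin 2}
    (hh : Measurable h) : errD D (fun x => 1 - h x) = 1 - errD D h := by
  rw [errD_eq_measureReal, errSet_neg, probReal_compl_eq_one_sub (measurableSet_errSet hh),
    errD_eq_measureReal]

theorem errS_neg (S : Fin n → X × Fin 2) (h : X → Fin 2) :
    errS S (fun x => 1 - h x) = (n - hitCount (errSet h) S) / n := by
  have hcompl : (hitCount (errSet h)ᶜ S : ℝ) = n - hitCount (errSet h) S :=
    eq_sub_of_add_eq (by exact_mod_cast hitCount_compl_add S)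
  rw [errS_eq_hitCount, errSet_neg, hcompl]

theorem pmfExp_uniformOfFinset_s11 {H : Type*} (s : Finset H) (hs : s.Nonempty) (φ : H → ℝ) :
    pmfExp (PMF.uniformOfFinset s hs) φ = (∑ f ∈ s, φ f) / #s := by
  rw [pmfExp, tsum_eq_sum (s := s) fun f hf => by simp [PMF.uniformOfFinset_apply, hf], sum_div]
  refine sum_congr rfl fun f hf => ?_
  simp [PMF.uniformOfFinset_apply, hf, div_eq_inv_mul]

open scoped Classical in
theorem ermSet_pair_of_lt {f g : X → Fin k} {S : Fin n → X × Fin k}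
    (hfg : errS S f < errS S g) : ermSet {f, g} S = {f} := by
  ext u
  simp only [ermSet, mem_filter, mem_insert, mem_singleton, forall_eq_or_imp, forall_eq]
  constructor
  · rintro ⟨rfl | rfl, hu, -⟩
    · rfl
    · exact absurd hu hfg.not_ge
  · rintro rfl
    exact ⟨Or.inl rfl, le_rfl, hfg.le⟩

open scoped Classical in
theorem ermSet_pair_of_eq {f g : X → Fin k} {S : Fin n → X × Fin k}
    (hfg : errS S f = errS S g) : ermSet {f, g} S = {f, g} := by
  refine filter_true_of_mem fun u hu => ?_
  simp only [mem_insert, mem_singleton] at hu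
  rcases hu with rfl | rfl <;> simp [hfg]

theorem self_ne_one_sub [Nonempty X] (h : X → Fin 2) : h ≠ fun x => 1 - h x := by
  obtain ⟨x⟩ := ‹Nonempty X›
  have key : ∀ a : Fin 2, a ≠ 1 - a := by decide
  exact fun e => key (h x) (congrFun e x)

theorem pmfExp_ermPMF_Bbin [Nonempty X] (D : Measure (X × Fin 2)) [IsProbabilityMeasure D]
    {h : X → Fin 2} (hh : Measurable h) (S : Fin n → X × Fin 2) :
    pmfExp (ermPMF (Bbin h) (Bbin_nonempty h) S) (errD D) =
      ermLoss (errD D h) n (hitCount (errSet h) S) := by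
  classical
  set c := hitCount (errSet h) S
  have hc : c ≤ n := hitCount_le S
  have hS : errS S (fun x => 1 - h x) - errS S h = (n - 2 * c) / n := by
    rw [errS_neg, errS_eq_hitCount]
    ring
  rw [ermPMF, pmfExp_uniformOfFinset_s11]
  rcases lt_trichotomy (2 * c) n with hlt | heq | hgt
  · have : errS S h < errS S (fun x => 1 - h x) := by
      rw [← sub_pos, hS]
      have : (2 * c : ℝ) < n := by exact_mod_cast hlt
      exact div_pos (by linarith) (by linarith)
    rw [Bbin, ermSet_pair_of_lt this, ermLoss_of_lt hlt]
    simp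
  · have : errS S h = errS S (fun x => 1 - h x) := by
      have : (2 * c : ℝ) = n := by exact_mod_cast heq
      rw [← sub_eq_zero, ← neg_sub, hS, this, sub_self, zero_div, neg_zero]
    have hne : h ∉ ({fun x => 1 - h x} : Finset (X → Fin 2)) :=
      notMem_singleton.2 (self_ne_one_sub h)
    rw [Bbin, ermSet_pair_of_eq this, sum_insert hne, card_insert_of_notMem hne, sum_singleton,
      card_singleton, errD_neg D hh, ermLoss_of_eq heq]
    norm_num
  · have : errS S (fun x => 1 - h x) < errS S h := by
      rw [← sub_neg, hS]
      have : (n : ℝ) < 2 * c := by exact_mod_cast hgt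
      exact div_neg_of_neg_of_pos (by linarith) (by exact_mod_cast (by omega : 0 < n))
    rw [Bbin, pair_comm, ermSet_pair_of_lt this, ermLoss_of_gt hgt]
    simp [errD_neg D hh]

theorem LG_Bbin_eq_ermRisk [Nonempty X] (D : Measure (X × Fin 2)) [IsProbabilityMeasure D]
    {h : X → Fin 2} (hh : Measurable h) (n : ℕ) :
    LG D (Bbin h) (Bbin_nonempty h) n = ermRisk (errD D h) n := by
  simp only [LG, pmfExp_ermPMF_Bbin D hh]
  exact integral_comp_hitCount D (measurableSet_errSet hh) _

theorem integral_max_abs_errS_sub_errD_le (D : Measure (X × Fin 2)) [IsProbabilityMeasure D]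
    {h : X → Fin 2} (hh : Measurable h) (hn : 0 < n) :
    ∫ S, max |errS S h - errD D h|
          |errS S (fun x => 1 - h x) - errD D (fun x => 1 - h x)|
        ∂(Measure.pi fun _ : Fin n => D) ≤ 1 / √n := by
  have hmax : ∀ S : Fin n → X × Fin 2,
      max |errS S h - errD D h| |errS S (fun x => 1 - h x) - errD D (fun x => 1 - h x)| =
        |(hitCount (errSet h) S : ℝ) / n - errD D h| := fun S => by
    have hn' : (n : ℝ) ≠ 0 := by exact_mod_cast hn.ne'
    have hflip : ((n : ℝ) - hitCount (errSet h) S) / n - (1 - errD D h) =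
        -((hitCount (errSet h) S : ℝ) / n - errD D h) := by
      field_simp
      ring
    rw [errS_neg, errD_neg D hh, hflip, abs_neg, errS_eq_hitCount, max_self]
  simp only [hmax]
  rw [integral_comp_hitCount D (measurableSet_errSet hh) fun c => |(c : ℝ) / n - errD D h|]
  exact sum_abs_sub_mul_bernstein_le measureReal_nonneg measureReal_le_one hn

end Binary

/-- **Successful base class: binary classification** (Proposition 3.1).  In binary
classification the mapping `h ↦ B_h = {h, 1 - h}` is a successful base class with uniform
convergence rate `e(n) = 1/√n` and constant `α = 1/2`: for every distribution `D` on
`X × {0,1}` and every (measurable) hypothesis `h`,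
(i) `LG_{n+1}(h) ≤ LG_n(h)` for every `n`;
(ii) `E_{S∼D^n}[max(|Err_S(h) − Err_D(h)|, |Err_S(1−h) − Err_D(1−h)|)] ≤ 1/√n` for `n ≥ 1`;
(iii) `LG_0(h) = 1/2`. -/
theorem binary_base_class_successful
    (D : Measure (X × Fin 2)) [IsProbabilityMeasure D]
    (h : X → Fin 2) (hmeas : Measurable h) :
    (∀ n : ℕ, LG D (Bbin h) (Bbin_nonempty h) (n + 1) ≤ LG D (Bbin h) (Bbin_nonempty h) n) ∧
    (∀ n : ℕ, 1 ≤ n →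
      ∫ S, max |errS S h - errD D h|
            |errS S (fun x => 1 - h x) - errD D (fun x => 1 - h x)|
          ∂(Measure.pi fun _ : Fin n => D) ≤ 1 / Real.sqrt n) ∧
    LG D (Bbin h) (Bbin_nonempty h) 0 = 1 / 2 := by
  have : Nonempty X := (Measure.nonempty_of_neZero D).map Prod.fst
  refine ⟨fun n => ?_, fun n hn => integral_max_abs_errS_sub_errD_le D hmeas hn, ?_⟩
  · rw [LG_Bbin_eq_ermRisk D hmeas, LG_Bbin_eq_ermRisk D hmeas]
    exact ermRisk_succ_le measureReal_nonneg measureReal_le_one n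
  · rw [LG_Bbin_eq_ermRisk D hmeas, ermRisk_zero]

end
end

section
/- Let p = (p_1,…,p_k) be a probability vector and set q_j = 1 − p_j. Let X_1, X_2, … be i.i.d. random variables with values in {1,…,k} and Pr[X_i = j] = p_j. For a finite tuple L = (X_1,…,X_n), let I(L) = {j : Σ_{i=1}^n 1[X_i = j] is maximal} and f(L) = (1/|I(L)|)·Σ_{j∈I(L)} q_j. Then for every n ≥ 0: E[f(X_1,…,X_{n+1})] ≤ E[f(X_1,…,X_n)]. -/
/-!
STATEMENT 15: Key combinatorial step of Lemma 4.2.  Let `p` be a probability vector on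
`{1,…,k}`, `q_j = 1 − p_j`, and let `X_1, X_2, …` be i.i.d. with `Pr[X_i = j] = p_j`.
With `I(L)` the set of modes (most frequent values) of the tuple `L` and
`f(L) = (1/|I(L)|) Σ_{j ∈ I(L)} q_j`, the expectation `E[f(X_1,…,X_n)]` is non-increasing
in `n`.  (Expectations over the i.i.d. sample are written as finite sums over all tuples,
weighted by their probabilities `Π_i p (L i)`.)
-/

open Finset

noncomputable section

/-- The number of occurrences of the value `j` in the tuple `L`. -/
def modeCount {k n : ℕ} (L : Fin n → Fin k) (j : Fin k) : ℕ :=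
  (Finset.univ.filter fun i => L i = j).card

/-- `I(L)`: the set of values with the largest number of occurrences in `L`.
(For the empty tuple this is all of `Fin k`.) -/
def modeSet {k n : ℕ} (L : Fin n → Fin k) : Finset (Fin k) :=
  Finset.univ.filter fun j => ∀ j', modeCount L j' ≤ modeCount L j

/-- `f(L) = (1/|I(L)|) Σ_{j ∈ I(L)} q j`: the expected weight of a uniformly random mode
of the tuple `L`. -/
def modeErr {k : ℕ} (q : Fin k → ℝ) {n : ℕ} (L : Fin n → Fin k) : ℝ :=
  (∑ j ∈ modeSet L, q j) / (modeSet L).card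

/-!
Write an `(n + 1)`-sample as a fresh draw `i` prepended to an `n`-sample `L`: the difference of
the two expectations is then `E_L [∑ i, p i * (f (i :: L) - f L)]`, and only three kinds of `i`
matter. Any value two or more short of the maximal count leaves the set of modes `I` unchanged.
Prepending a mode makes it the unique mode; these terms add up to
`∑_{i ∈ I} p i * q i - (∑_I p) * (∑_I q) / #I ≤ 0` by Chebyshev's sum inequality, as `p` and
`q = 1 - p` are oppositely ordered. Prepending a value `i` exactly one short of the maximal count
adds it to `I` and contributes `p i * ∑_{j ∈ I} (q i - q j) / (#I * (#I + 1))`. Exchanging the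
values `i` and `j` in `L` maps such configurations `(L, i, j)` bijectively to `(L', j, i)`, and
`i :: L` and `j :: L'` have the same counts, hence the same probability: these terms cancel in
expectation.
-/

section

variable {k n : ℕ}

lemma sum_fin_succ_pi {α M : Type*} [Fintype α] [AddCommMonoid M] (F : (Fin (n + 1) → α) → M) :
    ∑ L : Fin (n + 1) → α, F L = ∑ L : Fin n → α, ∑ i, F (Fin.cons i L) := by
  rw [← Fintype.sum_equiv (Fin.consEquiv fun _ => α) (fun x => F (Fin.cons x.1 x.2)) F
    fun _ => rfl, Fintype.sum_prod_type, sum_comm]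

lemma sum_prod_mul_sub_sum_prod_mul {α : Type*} [Fintype α] (p : α → ℝ) (hsum : ∑ i, p i = 1)
    (f : (Fin (n + 1) → α) → ℝ) (g : (Fin n → α) → ℝ) :
    ∑ L : Fin (n + 1) → α, (∏ t, p (L t)) * f L - ∑ L : Fin n → α, (∏ t, p (L t)) * g L =
      ∑ L : Fin n → α, (∏ t, p (L t)) * ∑ i, p i * (f (Fin.cons i L) - g L) := by
  rw [sum_fin_succ_pi, ← sum_sub_distrib]
  refine sum_congr rfl fun L _ => ?_
  simp only [Fin.prod_univ_succ, Fin.cons_zero, Fin.cons_succ, mul_sub, mul_sum, sum_sub_distrib,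
    ← sum_mul, hsum]
  congr 1
  · exact sum_congr rfl fun i _ => by ring
  · ring

lemma sum_mul_sub_sum_div_card_nonpos {ι : Type*} {s : Finset ι} {p q : ι → ℝ}
    (hpq : AntivaryOn p q s) : ∑ i ∈ s, p i * (q i - (∑ j ∈ s, q j) / #s) ≤ 0 := by
  rcases s.eq_empty_or_nonempty with rfl | hs
  · simp
  have hcard : (0 : ℝ) < #s := by exact_mod_cast hs.card_pos
  rw [sum_congr rfl fun i _ => mul_sub (p i) _ _, sum_sub_distrib, ← sum_mul, sub_nonpos,
    mul_div_assoc', le_div_iff₀ hcard, mul_comm]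
  exact hpq.card_mul_sum_le_sum_mul_sum

lemma sum_insert_div_card_sub_sum_div_card {ι : Type*} [DecidableEq ι] {s : Finset ι} {i : ι}
    (hi : i ∉ s) (hs : s.Nonempty) (q : ι → ℝ) :
    (∑ j ∈ insert i s, q j) / #(insert i s) - (∑ j ∈ s, q j) / #s =
      ∑ j ∈ s, (q i - q j) / (#s * (#s + 1)) := by
  have hcard : (#s : ℝ) ≠ 0 := by exact_mod_cast hs.card_pos.ne'
  rw [sum_insert hi, card_insert_of_notMem hi, ← sum_div, sum_sub_distrib, sum_const,
    nsmul_eq_mul]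
  push_cast
  field_simp
  ring

lemma sum_eq_zero_of_apply_swap_eq_neg {α : Type*} [Fintype α] (A : α × α → ℝ)
    (hA : ∀ x, A x.swap = -A x) : ∑ x, A x = 0 := by
  have h := Fintype.sum_equiv (Equiv.prodComm α α) A (fun x => -A x) fun x => by
    rw [Equiv.prodComm_apply, hA, neg_neg]
  rw [sum_neg_distrib] at h
  linarith

def maxCount (L : Fin n → Fin k) : ℕ :=
  univ.sup (modeCount L)

def nearModeSet (L : Fin n → Fin k) : Finset (Fin k) :=
  univ.filter fun i => modeCount L i + 1 = maxCount L

lemma modeCount_le_maxCount (L : Fin n → Fin k) (j : Fin k) : modeCount L j ≤ maxCount L :=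
  le_sup (mem_univ j)

lemma mem_modeSet_iff {L : Fin n → Fin k} {j : Fin k} :
    j ∈ modeSet L ↔ modeCount L j = maxCount L := by
  simp only [modeSet, mem_filter, mem_univ, true_and]
  exact ⟨fun h => (modeCount_le_maxCount L j).antisymm (Finset.sup_le fun j' _ => h j'),
    fun h j' => h ▸ modeCount_le_maxCount L j'⟩

lemma mem_nearModeSet_iff {L : Fin n → Fin k} {i : Fin k} :
    i ∈ nearModeSet L ↔ modeCount L i + 1 = maxCount L := by
  simp [nearModeSet]

lemma disjoint_modeSet_nearModeSet (L : Fin n → Fin k) : Disjoint (modeSet L) (nearModeSet L) :=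
  disjoint_left.2 fun i hi hi' => by
    rw [mem_modeSet_iff] at hi
    rw [mem_nearModeSet_iff] at hi'
    omega

lemma modeSet_nonempty [Nonempty (Fin k)] (L : Fin n → Fin k) : (modeSet L).Nonempty := by
  obtain ⟨j, -, hj⟩ := exists_mem_eq_sup univ univ_nonempty (modeCount L)
  exact ⟨j, mem_modeSet_iff.2 hj.symm⟩

lemma modeCount_cons (i : Fin k) (L : Fin n → Fin k) (j : Fin k) :
    modeCount (Fin.cons i L) j = modeCount L j + if j = i then 1 else 0 := by
  simp only [modeCount, card_filter, Fin.sum_univ_succ, Fin.cons_zero, Fin.cons_succ]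
  split_ifs <;> simp_all [add_comm, eq_comm]

lemma maxCount_cons (i : Fin k) (L : Fin n → Fin k) :
    maxCount (Fin.cons i L) = max (maxCount L) (modeCount L i + 1) := by
  apply le_antisymm
  · refine Finset.sup_le fun j _ => ?_
    rw [modeCount_cons]
    have := modeCount_le_maxCount L j
    split_ifs with h <;> [subst h; skip] <;> omega
  · refine max_le (Finset.sup_le fun j _ => ?_) ?_
    · exact (Nat.le_add_right _ _).trans (modeCount_cons i L j ▸ modeCount_le_maxCount _ j)
    · simpa [modeCount_cons] using modeCount_le_maxCount (Fin.cons i L) i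

lemma modeSet_cons_of_mem {L : Fin n → Fin k} {i : Fin k} (hi : i ∈ modeSet L) :
    modeSet (Fin.cons i L) = {i} := by
  rw [mem_modeSet_iff] at hi
  ext j
  have := modeCount_le_maxCount L j
  simp only [mem_modeSet_iff, modeCount_cons, maxCount_cons, hi, max_eq_right (Nat.le_succ _),
    mem_singleton]
  split_ifs with h <;> [subst h; skip] <;> omega

lemma modeSet_cons_of_mem_nearModeSet {L : Fin n → Fin k} {i : Fin k}
    (hi : i ∈ nearModeSet L) : modeSet (Fin.cons i L) = insert i (modeSet L) := by
  rw [mem_nearModeSet_iff] at hi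
  ext j
  have := modeCount_le_maxCount L j
  simp only [mem_modeSet_iff, mem_insert, modeCount_cons, maxCount_cons, hi, max_self]
  split_ifs with h <;> [subst h; skip] <;> omega

lemma modeSet_cons_of_lt {L : Fin n → Fin k} {i : Fin k}
    (hi : modeCount L i + 1 < maxCount L) : modeSet (Fin.cons i L) = modeSet L := by
  ext j
  have := modeCount_le_maxCount L j
  simp only [mem_modeSet_iff, modeCount_cons, maxCount_cons, max_eq_left hi.le]
  split_ifs with h <;> [subst h; skip] <;> omega

section ModeErr

variable (q : Fin k → ℝ) {L : Fin n → Fin k} {i : Fin k}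

lemma modeErr_cons_of_mem (hi : i ∈ modeSet L) : modeErr q (Fin.cons i L) = q i := by
  simp [modeErr, modeSet_cons_of_mem hi]

lemma modeErr_cons_sub_of_mem_nearModeSet (hi : i ∈ nearModeSet L) :
    modeErr q (Fin.cons i L) - modeErr q L =
      ∑ j ∈ modeSet L, (q i - q j) / (#(modeSet L) * (#(modeSet L) + 1)) := by
  have : Nonempty (Fin k) := ⟨i⟩
  rw [modeErr, modeErr, modeSet_cons_of_mem_nearModeSet hi]
  exact sum_insert_div_card_sub_sum_div_card
    (disjoint_right.1 (disjoint_modeSet_nearModeSet L) hi) (modeSet_nonempty L) q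

lemma modeErr_cons_of_lt (hi : modeCount L i + 1 < maxCount L) :
    modeErr q (Fin.cons i L) = modeErr q L := by
  rw [modeErr, modeErr, modeSet_cons_of_lt hi]

lemma sum_mul_modeErr_cons_sub (p : Fin k → ℝ) (L : Fin n → Fin k) :
    ∑ i, p i * (modeErr q (Fin.cons i L) - modeErr q L) =
      ∑ i ∈ modeSet L, p i * (q i - modeErr q L) +
        ∑ i ∈ nearModeSet L, p i * (modeErr q (Fin.cons i L) - modeErr q L) := by
  have hmode : ∑ i ∈ modeSet L, p i * (q i - modeErr q L) =
      ∑ i ∈ modeSet L, p i * (modeErr q (Fin.cons i L) - modeErr q L) :=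
    sum_congr rfl fun i hi => by rw [modeErr_cons_of_mem q hi]
  rw [hmode, ← sum_union (disjoint_modeSet_nearModeSet L)]
  refine (sum_subset (subset_univ _) fun i _ hi => ?_).symm
  rw [mem_union, mem_modeSet_iff, mem_nearModeSet_iff, not_or] at hi
  have := modeCount_le_maxCount L i
  rw [modeErr_cons_of_lt q (by omega), sub_self, mul_zero]

end ModeErr

section Perm

variable (σ : Equiv.Perm (Fin k)) (L : Fin n → Fin k)

lemma modeCount_perm_comp (j : Fin k) : modeCount (σ ∘ L) j = modeCount L (σ.symm j) := by
  simp only [modeCount, Function.comp_apply, ← Equiv.eq_symm_apply]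

lemma maxCount_perm_comp : maxCount (σ ∘ L) = maxCount L := by
  have : modeCount (σ ∘ L) = modeCount L ∘ σ.symm := funext (modeCount_perm_comp σ L)
  rw [maxCount, maxCount, this, ← Equiv.coe_toEmbedding, ← sup_map, univ_map_equiv_to_embedding]

lemma mem_modeSet_perm_comp {j : Fin k} : j ∈ modeSet (σ ∘ L) ↔ σ.symm j ∈ modeSet L := by
  rw [mem_modeSet_iff, mem_modeSet_iff, modeCount_perm_comp, maxCount_perm_comp]

lemma mem_nearModeSet_perm_comp {j : Fin k} :
    j ∈ nearModeSet (σ ∘ L) ↔ σ.symm j ∈ nearModeSet L := by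
  rw [mem_nearModeSet_iff, mem_nearModeSet_iff, modeCount_perm_comp, maxCount_perm_comp]

lemma card_modeSet_perm_comp : #(modeSet (σ ∘ L)) = #(modeSet L) := by
  have : modeSet (σ ∘ L) = (modeSet L).map σ.toEmbedding := by
    ext j
    rw [mem_map_equiv, mem_modeSet_perm_comp]
  rw [this, card_map]

end Perm

lemma prod_comp_eq_prod_pow_modeCount {M : Type*} [CommMonoid M] (g : Fin k → M)
    (L : Fin n → Fin k) : ∏ t, g (L t) = ∏ j, g j ^ modeCount L j := by
  rw [← prod_fiberwise univ L]
  refine prod_congr rfl fun j _ => ?_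
  rw [modeCount, prod_congr rfl fun t ht => congrArg g (mem_filter.1 ht).2, prod_const]

lemma modeCount_swap_comp_of_modeCount_eq {L : Fin n → Fin k} {i j : Fin k}
    (h : modeCount L i = modeCount L j) : modeCount (Equiv.swap i j ∘ L) = modeCount L := by
  funext v
  rw [modeCount_perm_comp, Equiv.symm_swap]
  rcases eq_or_ne v i with rfl | hvi
  · rw [Equiv.swap_apply_left, h]
  rcases eq_or_ne v j with rfl | hvj
  · rw [Equiv.swap_apply_right, h]
  rw [Equiv.swap_apply_of_ne_of_ne hvi hvj]

lemma prod_cons_swap_comp (p : Fin k → ℝ) {L : Fin n → Fin k} {i j : Fin k}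
    (hi : i ∈ nearModeSet L) (hj : j ∈ modeSet L) :
    ∏ t, p ((Fin.cons j (Equiv.swap i j ∘ L) : Fin (n + 1) → Fin k) t) =
      ∏ t, p ((Fin.cons i L : Fin (n + 1) → Fin k) t) := by
  have hcount : modeCount (Fin.cons i L) i = modeCount (Fin.cons i L) j := by
    rw [mem_nearModeSet_iff] at hi
    rw [mem_modeSet_iff] at hj
    rcases eq_or_ne j i with rfl | hji
    · omega
    simp only [modeCount_cons, if_true, if_neg hji]
    omega
  have hcons : Fin.cons j (Equiv.swap i j ∘ L) = Equiv.swap i j ∘ Fin.cons i L := by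
    rw [Fin.comp_cons, Equiv.swap_apply_left]
  rw [hcons, prod_comp_eq_prod_pow_modeCount p (Equiv.swap i j ∘ _),
    modeCount_swap_comp_of_modeCount_eq hcount, ← prod_comp_eq_prod_pow_modeCount]

lemma sum_mul_sum_nearModeSet_eq_zero (p q : Fin k → ℝ) :
    ∑ L : Fin n → Fin k, (∏ t, p (L t)) *
      ∑ i ∈ nearModeSet L, p i * (modeErr q (Fin.cons i L) - modeErr q L) = 0 := by
  set g : (Fin n → Fin k) → Fin k × Fin k → ℝ := fun L x =>
    (∏ t, p ((Fin.cons x.1 L : Fin (n + 1) → Fin k) t)) *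
      ((q x.1 - q x.2) / (#(modeSet L) * (#(modeSet L) + 1)))
  set A : Fin k × Fin k → ℝ := fun x =>
    ∑ L ∈ univ.filter fun L => x.1 ∈ nearModeSet L ∧ x.2 ∈ modeSet L, g L x
  have hA : ∀ x, A x.swap = -A x := by
    rintro ⟨i, j⟩
    have he : ∀ L : Fin n → Fin k,
        (Equiv.piCongrRight fun _ => Equiv.swap i j) L = Equiv.swap i j ∘ L := fun _ => rfl
    rw [← sum_neg_distrib]
    refine (sum_equiv (Equiv.piCongrRight fun _ => Equiv.swap i j) (fun L => ?_)
      (fun L hL => ?_)).symm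
    · simp only [mem_filter, mem_univ, true_and, Prod.swap, he, mem_nearModeSet_perm_comp,
        mem_modeSet_perm_comp, Equiv.symm_swap, Equiv.swap_apply_left, Equiv.swap_apply_right]
    · obtain ⟨hi, hj⟩ := (mem_filter.1 hL).2
      simp only [g, he, Prod.swap, prod_cons_swap_comp p hi hj, card_modeSet_perm_comp]
      ring
  calc _ = ∑ L, ∑ x ∈ nearModeSet L ×ˢ modeSet L, g L x := by
        refine sum_congr rfl fun L _ => ?_
        rw [sum_product, mul_sum]
        refine sum_congr rfl fun i hi => ?_
        rw [modeErr_cons_sub_of_mem_nearModeSet q hi, mul_sum, mul_sum]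
        refine sum_congr rfl fun j _ => ?_
        simp only [g, Fin.prod_univ_succ, Fin.cons_zero, Fin.cons_succ]
        ring
    _ = ∑ x, A x := sum_comm' fun L x => by simp
    _ = 0 := sum_eq_zero_of_apply_swap_eq_neg A hA

end

theorem expected_mode_error_nonincreasing_general
    (k : ℕ) (p : Fin k → ℝ)
    (hp : ∀ j, 0 ≤ p j) (hsum : ∑ j, p j = 1) (n : ℕ) :
    ∑ L : Fin (n + 1) → Fin k, (∏ i, p (L i)) * modeErr (fun j => 1 - p j) L ≤
      ∑ L : Fin n → Fin k, (∏ i, p (L i)) * modeErr (fun j => 1 - p j) L := by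
  set q : Fin k → ℝ := fun j => 1 - p j
  have hpq : Antivary p q := fun i j hij => by simp only [q] at hij; linarith
  rw [← sub_nonpos, sum_prod_mul_sub_sum_prod_mul p hsum]
  simp_rw [sum_mul_modeErr_cons_sub, mul_add, sum_add_distrib, sum_mul_sum_nearModeSet_eq_zero,
    add_zero]
  refine sum_nonpos fun L _ => mul_nonpos_of_nonneg_of_nonpos (prod_nonneg fun t _ => hp (L t)) ?_
  exact sum_mul_sub_sum_div_card_nonpos (hpq.antivaryOn _)

/-- **The expected error of a uniformly random mode is non-increasing in the sample size.**
For every probability vector `p` on `Fin k` (with `q_j = 1 - p_j`) and every `n`,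
`E[f(X_1,…,X_{n+1})] ≤ E[f(X_1,…,X_n)]` where the `X_i` are i.i.d. with law `p`. -/
theorem expected_mode_error_nonincreasing
    (k : ℕ) (hk : 0 < k) (p : Fin k → ℝ)
    (hp : ∀ j, 0 ≤ p j) (hsum : ∑ j, p j = 1) (n : ℕ) :
    ∑ L : Fin (n + 1) → Fin k, (∏ i, p (L i)) * modeErr (fun j => 1 - p j) L ≤
      ∑ L : Fin n → Fin k, (∏ i, p (L i)) * modeErr (fun j => 1 - p j) L :=
  expected_mode_error_nonincreasing_general k p hp hsum n

end
end
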